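/- Let E = ℝ^ℓ × ℝ^m be the product of Euclidean spaces (with the product inner-product structure). Let H be a convex body in ℝ^ℓ, K a convex body in ℝ^m, and z' ∈ ℝ^m a unit vector; set z = (0, z') ∈ E. Then for every x ∈ ℝ^ℓ and y ∈ ℝ^m: w((H ×ˢ K) ∩ ((H ×ˢ K) + (x,y)), z) equals w(K ∩ (K + y), z') if x ∈ H − H, and equals 0 otherwise. (Theorem 6.2(I): the width-covariogram of a Cartesian product is completely determined by the difference body of H and by K.) -/

import Mathlib

open Set
open scoped Pointwise Classical

/-- Width of a set `A` in direction `z`: the difference of the supremum and infimum of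
the inner products with `z` (with the real-`sSup` junk-value convention `w ∅ z = 0`). -/
noncomputable def w {E : Type*} [NormedAddCommGroup E] [InnerProductSpace ℝ E]
    (A : Set E) (z : E) : ℝ :=
  sSup ((fun a => (inner ℝ a z : ℝ)) '' A) - sInf ((fun a => (inner ℝ a z : ℝ)) '' A)

/-- The Cartesian product of a set `H ⊆ ℝ^ℓ` and `K ⊆ ℝ^m`, viewed as a subset of the
product Euclidean space `WithLp 2 (ℝ^ℓ × ℝ^m)` (the product inner-product structure). -/
noncomputable def prodW {l m : ℕ} (H : Set (EuclideanSpace ℝ (Fin l)))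
    (K : Set (EuclideanSpace ℝ (Fin m))) :
    Set (WithLp 2 (EuclideanSpace ℝ (Fin l) × EuclideanSpace ℝ (Fin m))) :=
  (WithLp.equiv 2 (EuclideanSpace ℝ (Fin l) × EuclideanSpace ℝ (Fin m))).symm '' (H ×ˢ K)

/-!
Translation acts coordinatewise, so `(H × K) ∩ ((H × K) + (x, y))` is the product of
`H ∩ (H + x)` and `K ∩ (K + y)`, and the first factor is nonempty exactly when `x ∈ H - H`.
The direction `(0, z')` only sees the second factor, so the width is that of `K ∩ (K + y)`
when the first factor is nonempty, and the width of `∅`, i.e. `0`, otherwise.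
-/

lemma inter_image_add_right_nonempty_iff {G : Type*} [AddCommGroup G] {s : Set G} {x : G} :
    (s ∩ (· + x) '' s).Nonempty ↔ x ∈ s - s := by
  simp only [Set.Nonempty, mem_inter_iff, mem_image, mem_sub, sub_eq_iff_eq_add']
  constructor
  · rintro ⟨a, ha, b, hb, rfl⟩
    exact ⟨_, ha, b, hb, rfl⟩
  · rintro ⟨a, ha, b, hb, rfl⟩
    exact ⟨_, ha, b, hb, rfl⟩

lemma w_empty {E : Type*} [NormedAddCommGroup E] [InnerProductSpace ℝ E] (z : E) :
    w (∅ : Set E) z = 0 := by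
  simp [w]

namespace WithLp

section AddCommGroup

variable {E F : Type*} [AddCommGroup E] [AddCommGroup F]

lemma image_add_toLp_image_prod (s : Set E) (t : Set F) (x : E) (y : F) :
    (· + toLp 2 (x, y)) '' (toLp 2 '' s ×ˢ t) = toLp 2 '' (((· + x) '' s) ×ˢ ((· + y) '' t)) := by
  rw [image_image, ← prodMap_image_prod, image_image]
  rfl

lemma toLp_image_prod_inter_image_add (s : Set E) (t : Set F) (x : E) (y : F) :
    toLp 2 '' s ×ˢ t ∩ (· + toLp 2 (x, y)) '' (toLp 2 '' s ×ˢ t) =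
      toLp 2 '' ((s ∩ (· + x) '' s) ×ˢ (t ∩ (· + y) '' t)) := by
  rw [image_add_toLp_image_prod, ← image_inter (toLp_injective 2), prod_inter_prod]

end AddCommGroup

variable {E F : Type*} [NormedAddCommGroup E] [InnerProductSpace ℝ E]
  [NormedAddCommGroup F] [InnerProductSpace ℝ F]

lemma inner_toLp_zero_prod_right (p : E × F) (z : F) :
    inner ℝ (toLp 2 p) (toLp 2 ((0 : E), z)) = inner ℝ p.2 z := by
  simp

lemma w_toLp_image_prod_zero {S : Set E} (hS : S.Nonempty) (T : Set F) (z : F) :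
    w (toLp 2 '' S ×ˢ T) (toLp 2 ((0 : E), z)) = w T z := by
  have himage : (fun a => inner ℝ a (toLp 2 ((0 : E), z))) '' (toLp 2 '' S ×ˢ T) =
      (fun b => inner ℝ b z) '' T := by
    conv_rhs => rw [← snd_image_prod hS T, image_image]
    simp only [image_image, inner_toLp_zero_prod_right]
  simp only [w, himage]

end WithLp

theorem width_covariogram_of_prod_general
    (l m : ℕ)
    (H : Set (EuclideanSpace ℝ (Fin l)))
    (K : Set (EuclideanSpace ℝ (Fin m)))
    (z' : EuclideanSpace ℝ (Fin m))
    (x : EuclideanSpace ℝ (Fin l)) (y : EuclideanSpace ℝ (Fin m)) :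
    w (prodW H K ∩
        ((· + (WithLp.equiv 2 (EuclideanSpace ℝ (Fin l) × EuclideanSpace ℝ (Fin m))).symm (x, y))
          '' prodW H K))
      ((WithLp.equiv 2 (EuclideanSpace ℝ (Fin l) × EuclideanSpace ℝ (Fin m))).symm (0, z'))
      = if x ∈ H - H then w (K ∩ ((· + y) '' K)) z' else 0 := by
  simp only [prodW, WithLp.equiv_symm_apply, WithLp.toLp_image_prod_inter_image_add]
  split_ifs with hx
  · exact WithLp.w_toLp_image_prod_zero (inter_image_add_right_nonempty_iff.2 hx) _ _
  · rw [not_nonempty_iff_eq_empty.1 (mt inter_image_add_right_nonempty_iff.1 hx), empty_prod,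
      image_empty, w_empty]

/-- Theorem 6.2(I): the width-covariogram of `H × K` in direction `z = (0, z')` equals
`w(K ∩ (K + y), z')` when `x ∈ H − H` and `0` otherwise. -/
theorem width_covariogram_of_prod
    (l m : ℕ)
    (H : Set (EuclideanSpace ℝ (Fin l)))
    (hHne : H.Nonempty) (hHcp : IsCompact H) (hHcv : Convex ℝ H)
    (hHint : (interior H).Nonempty)
    (K : Set (EuclideanSpace ℝ (Fin m)))
    (hKne : K.Nonempty) (hKcp : IsCompact K) (hKcv : Convex ℝ K)
    (hKint : (interior K).Nonempty)
    (z' : EuclideanSpace ℝ (Fin m)) (hz' : ‖z'‖ = 1)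
    (x : EuclideanSpace ℝ (Fin l)) (y : EuclideanSpace ℝ (Fin m)) :
    w (prodW H K ∩
        ((· + (WithLp.equiv 2 (EuclideanSpace ℝ (Fin l) × EuclideanSpace ℝ (Fin m))).symm (x, y))
          '' prodW H K))
      ((WithLp.equiv 2 (EuclideanSpace ℝ (Fin l) × EuclideanSpace ℝ (Fin m))).symm (0, z'))
      = if x ∈ H - H then w (K ∩ ((· + y) '' K)) z' else 0 :=
  width_covariogram_of_prod_general l m H K z' x y
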